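/- arXiv:1012.4938 — 7 statements merged into one kernel-verified Lean document; each statement's English description precedes it below -/
import Mathlib

section
/- Let G1 and G2 be directed graphs on vertex set V. For a,b ∈ V, b is reachable from a in both G1 and G2 if and only if either a and b lie in the same subcomponent (i.e., a and b are in the same strongly connected component in both G1 and G2), or the subcomponent of a reaches the subcomponent of b in both of the derived acyclic digraphs Ĝ1 and Ĝ2. -/
/-- Reachability in a digraph given by its arc relation. -/
def reach {V : Type*} (g : V → V → Prop) : V → V → Prop := Relation.ReflTransGen g

/-- `a` and `b` lie in the same strongly connected component of `g`. -/
def sameSCC {V : Type*} (g : V → V → Prop) (a b : V) : Prop := reach g a b ∧ reach g b a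

/-- Arc relation of the derived digraph `Ĝ` built from a digraph `g`, where `τ`
is a topological numbering of the strong components of the *other* digraph
(so that subcomponents of a strong component of `g` are identified by their
`τ`-value).  There is an arc from (the subcomponent of) `a` to (the
subcomponent of) `b` if either they lie in the same strong component of `g`
and `b`'s subcomponent is the successor of `a`'s in the `τ`-order, or the
condensation of `g` contains an arc from `a`'s component to `b`'s component,
`a` lies in the last subcomponent of its component and `b` in the first
subcomponent of its component. -/
def hatArc {V : Type*} (g : V → V → Prop) (τ : V → ℕ) (a b : V) : Prop :=
  (sameSCC g a b ∧ τ a < τ b ∧ ∀ c, sameSCC g a c → τ a < τ c → τ b ≤ τ c) ∨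
  (¬ sameSCC g a b ∧ (∃ x y, sameSCC g a x ∧ sameSCC g b y ∧ g x y) ∧
    (∀ c, sameSCC g c a → τ c ≤ τ a) ∧ (∀ c, sameSCC g c b → τ b ≤ τ c))

section Aux

variable {V : Type*}

private lemma sameSCC_refl (g : V → V → Prop) (a : V) : sameSCC g a a :=
  ⟨Relation.ReflTransGen.refl, Relation.ReflTransGen.refl⟩

private lemma sameSCC_symm {g : V → V → Prop} {a b : V} (h : sameSCC g a b) : sameSCC g b a :=
  ⟨h.2, h.1⟩

private lemma sameSCC_trans {g : V → V → Prop} {a b c : V} (h1 : sameSCC g a b)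
    (h2 : sameSCC g b c) : sameSCC g a c :=
  ⟨h1.1.trans h2.1, h2.2.trans h1.2⟩

private lemma hatArc_reach {g : V → V → Prop} {τ : V → ℕ} {a b : V} (h : hatArc g τ a b) :
    reach g a b := by
  rcases h with ⟨hs, -⟩ | ⟨-, ⟨x, y, hax, hby, hxy⟩, -, -⟩
  · exact hs.1
  · exact hax.1.trans ((Relation.ReflTransGen.single hxy).trans hby.2)

private lemma hat_rtg_reach {g : V → V → Prop} {τ : V → ℕ} {a b : V}
    (h : Relation.ReflTransGen (hatArc g τ) a b) : reach g a b := by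
  induction h with
  | refl => exact Relation.ReflTransGen.refl
  | tail _ h2 ih => exact ih.trans (hatArc_reach h2)

/-- Climbing inside a strong component of `g` from a vertex to one of strictly
larger `τ`-value. -/
private lemma climb [Fintype V] {g : V → V → Prop} {τ : V → ℕ} :
    ∀ n a c, τ c - τ a ≤ n → sameSCC g a c → τ a < τ c →
      Relation.ReflTransGen (hatArc g τ) a c := by
  intro n
  induction n with
  | zero => intro a c hn hs hlt; omega
  | succ n ih =>
    intro a c hn hs hlt
    set S : Set V := {v | sameSCC g a v ∧ τ a < τ v} with hS
    have hfin : S.Finite := Set.toFinite S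
    have hne : S.Nonempty := ⟨c, hs, hlt⟩
    obtain ⟨m, hmS, hmmin⟩ := Set.exists_min_image S τ hfin hne
    have hmle : τ m ≤ τ c := hmmin c ⟨hs, hlt⟩
    by_cases hmc : τ m = τ c
    · refine Relation.ReflTransGen.single (Or.inl ⟨hs, hlt, ?_⟩)
      intro d hd hdlt
      have := hmmin d ⟨hd, hdlt⟩
      omega
    · have harc : hatArc g τ a m := by
        refine Or.inl ⟨hmS.1, hmS.2, ?_⟩
        intro d hd hdlt
        exact hmmin d ⟨hd, hdlt⟩
      have hmc' : sameSCC g m c := sameSCC_trans (sameSCC_symm hmS.1) hs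
      have : τ c - τ m ≤ n := by have := hmS.2; omega
      exact Relation.ReflTransGen.head harc (ih m c this hmc' (by omega))

/-- Crossing from the component of `a` to the component of `x` along the
arc `g a x`, starting and ending at arbitrary vertices of these components. -/
private lemma cross [Fintype V] {g : V → V → Prop} {τ : V → ℕ} {a x : V}
    (hax : g a x) (hnax : ¬ sameSCC g a x) :
    ∀ a' x', sameSCC g a a' → sameSCC g x x' →
      Relation.ReflTransGen (hatArc g τ) a' x' := by
  intro a' x' haa' hxx'
  -- maximal vertex of a's component
  set A : Set V := {c | sameSCC g a c} with hA
  obtain ⟨u, huA, humax⟩ := Set.exists_max_image A τ (Set.toFinite A)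
    ⟨a, sameSCC_refl g a⟩
  -- minimal vertex of x's component
  set X : Set V := {c | sameSCC g x c} with hX
  obtain ⟨v, hvX, hvmin⟩ := Set.exists_min_image X τ (Set.toFinite X)
    ⟨x, sameSCC_refl g x⟩
  have ha'A : a' ∈ A := haa'
  have hx'X : x' ∈ X := hxx'
  -- choose the "last subcomponent" source vertex u''
  obtain ⟨u'', hu''A, hreach1, hlast⟩ :
      ∃ u'', u'' ∈ A ∧ Relation.ReflTransGen (hatArc g τ) a' u'' ∧
        ∀ c, sameSCC g c u'' → τ c ≤ τ u'' := by
    by_cases hq : τ a' = τ u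
    · refine ⟨a', ha'A, Relation.ReflTransGen.refl, ?_⟩
      intro c hc
      have hcA : c ∈ A := sameSCC_trans haa' (sameSCC_symm hc)
      have := humax c hcA
      omega
    · have hlt : τ a' < τ u := lt_of_le_of_ne (humax a' ha'A) hq
      refine ⟨u, huA, climb _ a' u le_rfl (sameSCC_trans (sameSCC_symm haa') huA) hlt, ?_⟩
      intro c hc
      exact humax c (sameSCC_trans huA (sameSCC_symm hc))
  -- choose the "first subcomponent" target vertex v''
  obtain ⟨v'', hv''X, hreach2, hfirst⟩ :
      ∃ v'', v'' ∈ X ∧ Relation.ReflTransGen (hatArc g τ) v'' x' ∧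
        ∀ c, sameSCC g c v'' → τ v'' ≤ τ c := by
    by_cases hq : τ v = τ x'
    · refine ⟨x', hx'X, Relation.ReflTransGen.refl, ?_⟩
      intro c hc
      have hcX : c ∈ X := sameSCC_trans hxx' (sameSCC_symm hc)
      have := hvmin c hcX
      omega
    · have hlt : τ v < τ x' := lt_of_le_of_ne (hvmin x' hx'X) hq
      refine ⟨v, hvX, climb _ v x' le_rfl (sameSCC_trans (sameSCC_symm hvX) hxx') hlt, ?_⟩
      intro c hc
      exact hvmin c (sameSCC_trans hvX (sameSCC_symm hc))
  have harc : hatArc g τ u'' v'' := by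
    refine Or.inr ⟨?_, ⟨a, x, sameSCC_symm hu''A, sameSCC_symm hv''X, hax⟩, hlast, hfirst⟩
    intro hcon
    exact hnax (sameSCC_trans hu''A (sameSCC_trans hcon (sameSCC_symm hv''X)))
  exact hreach1.trans (Relation.ReflTransGen.head harc hreach2)

/-- If `b` is `g`-reachable from `a` and they lie in different strong
components, then vertices in their components are connected in the derived
digraph. -/
private lemma hat_main [Fintype V] {g : V → V → Prop} {τ : V → ℕ} {b : V} :
    ∀ {a}, reach g a b → ∀ a' b', sameSCC g a a' → sameSCC g b b' → ¬ sameSCC g a b →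
      Relation.ReflTransGen (hatArc g τ) a' b' := by
  intro a h
  induction h using Relation.ReflTransGen.head_induction_on with
  | refl => exact fun a' b' h1 h2 hn => absurd (sameSCC_refl g b) hn
  | head hax hxb ih =>
    rename_i a x
    intro a' b' haa' hbb' hnab
    by_cases hxb' : sameSCC g x b
    · -- the arc a → x crosses components
      have hnax : ¬ sameSCC g a x := fun h => hnab (sameSCC_trans h hxb')
      exact cross hax hnax a' b' haa' (sameSCC_trans hxb' hbb')
    · by_cases hax' : sameSCC g a x
      · exact ih a' b' (sameSCC_trans (sameSCC_symm hax') haa') hbb' hxb'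
      · exact (cross hax hax' a' x haa' (sameSCC_refl g x)).trans
          (ih x b' (sameSCC_refl g x) hbb' hxb')

end Aux

/-- `b` is reachable from `a` in both `g1` and `g2` iff `a` and `b` lie in the
same subcomponent (same SCC in both digraphs), or the subcomponent of `a`
reaches the subcomponent of `b` in both derived acyclic digraphs `Ĝ1` and `Ĝ2`. -/
theorem stmt_2 {V : Type*} [Fintype V] (g1 g2 : V → V → Prop) (t1 t2 : V → ℕ)
    (ht1 : ∀ a b, sameSCC g1 a b ↔ t1 a = t1 b)
    (ht1' : ∀ a b, reach g1 a b → t1 a ≤ t1 b)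
    (ht2 : ∀ a b, sameSCC g2 a b ↔ t2 a = t2 b)
    (ht2' : ∀ a b, reach g2 a b → t2 a ≤ t2 b) :
    ∀ a b : V,
      (reach g1 a b ∧ reach g2 a b) ↔
        ((sameSCC g1 a b ∧ sameSCC g2 a b) ∨
          (Relation.ReflTransGen (hatArc g1 t2) a b ∧
           Relation.ReflTransGen (hatArc g2 t1) a b)) := by
  intro a b
  constructor
  · rintro ⟨h1, h2⟩
    by_cases hs : sameSCC g1 a b ∧ sameSCC g2 a b
    · exact Or.inl hs
    · refine Or.inr ⟨?_, ?_⟩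
      · by_cases h11 : sameSCC g1 a b
        · have hn2 : ¬ sameSCC g2 a b := fun h => hs ⟨h11, h⟩
          have hle : t2 a ≤ t2 b := ht2' a b h2
          have hne : t2 a ≠ t2 b := fun h => hn2 ((ht2 a b).mpr h)
          exact climb (t2 b - t2 a) a b le_rfl h11 (lt_of_le_of_ne hle hne)
        · exact hat_main h1 a b (sameSCC_refl g1 a) (sameSCC_refl g1 b) h11
      · by_cases h22 : sameSCC g2 a b
        · have hn1 : ¬ sameSCC g1 a b := fun h => hs ⟨h, h22⟩
          have hle : t1 a ≤ t1 b := ht1' a b h1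
          have hne : t1 a ≠ t1 b := fun h => hn1 ((ht1 a b).mpr h)
          exact climb (t1 b - t1 a) a b le_rfl h22 (lt_of_le_of_ne hle hne)
        · exact hat_main h2 a b (sameSCC_refl g2 a) (sameSCC_refl g2 b) h22
  · rintro (⟨hs1, hs2⟩ | ⟨h1, h2⟩)
    · exact ⟨hs1.1, hs2.1⟩
    · exact ⟨hat_rtg_reach h1, hat_rtg_reach h2⟩
end

section
/- The digraphs Ĝ1 and Ĝ2 obtained from the subcomponent construction are acyclic. -/
lemma hatArc_acyclic {V : Type*} (g : V → V → Prop) (t t' : V → ℕ)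
    (ht : ∀ a b, sameSCC g a b ↔ t a = t b)
    (ht' : ∀ a b, reach g a b → t a ≤ t b) :
    ∀ a : V, ¬ Relation.TransGen (hatArc g t') a a := by
  have key : ∀ a b, hatArc g t' a b →
      t a < t b ∨ (t a = t b ∧ t' a < t' b) := by
    intro a b h
    rcases h with ⟨hsc, hlt, _⟩ | ⟨hns, ⟨x, y, hax, hby, gxy⟩, _, _⟩
    · exact Or.inr ⟨(ht a b).1 hsc, hlt⟩
    · have h1 : t a = t x := (ht a x).1 hax
      have h2 : t b = t y := (ht b y).1 hby
      have h3 : t x ≤ t y := ht' x y (Relation.ReflTransGen.single gxy)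
      have h4 : t a ≠ t b := fun h => hns ((ht a b).2 h)
      omega
  have key2 : ∀ a b, Relation.TransGen (hatArc g t') a b →
      t a < t b ∨ (t a = t b ∧ t' a < t' b) := by
    intro a b h
    induction h with
    | single h => exact key _ _ h
    | tail _ h ih =>
      rcases key _ _ h with h' | h' <;> rcases ih with h'' | h'' <;> omega
  intro a h
  rcases key2 a a h with h' | h' <;> omega

/-- The derived digraphs `Ĝ1` and `Ĝ2` obtained from the subcomponent
construction are acyclic: they contain no directed cycle. -/
theorem stmt_3 {V : Type*} [Fintype V] (g1 g2 : V → V → Prop) (t1 t2 : V → ℕ)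
    (ht1 : ∀ a b, sameSCC g1 a b ↔ t1 a = t1 b)
    (ht1' : ∀ a b, reach g1 a b → t1 a ≤ t1 b)
    (ht2 : ∀ a b, sameSCC g2 a b ↔ t2 a = t2 b)
    (ht2' : ∀ a b, reach g2 a b → t2 a ≤ t2 b) :
    (∀ a : V, ¬ Relation.TransGen (hatArc g1 t2) a a) ∧
    (∀ a : V, ¬ Relation.TransGen (hatArc g2 t1) a a) := by
  exact ⟨hatArc_acyclic g1 t1 t2 ht1 ht1', hatArc_acyclic g2 t2 t1 ht2 ht2'⟩
end

section
/- For every n that is a power of 2, there exist two directed paths G1, G2 on n vertices such that every digraph J (possibly containing Steiner vertices) whose reachability relation restricted to V realizes the join-reachability relation of {G1, G2} has size Ω(n log n). -/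
/-!
Call `(a, a + 2 ^ j)`, for `j < k` and `a < 2 ^ k` with bit `j` of `a` clear, a pair of level `j`;
it is comparable in both orders, so `J` has a path from `a` to `a + 2 ^ j`. Give every vertex `w`
of `J` two potentials, the largest index and the largest bit-reversed index of an original vertex
reaching `w`. From `a` to `a + 2 ^ j` they rise by exactly `2 ^ j` and `2 ^ (k - 1 - j)`, and no
arc between them rises by more. At level `j` weight an arc by rise₁ / `2 ^ j` + rise₂ /
`2 ^ (k - 1 - j)`, each term counting only when the rise is at most its scale. Then every path of
level `j` weighs at least `2`, while the weights of one arc over all levels form two truncated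
geometric series, each at most `2`. Two pairs of the same level share no arc: otherwise each end
of one reaches the far end of the other, which forces the indices to agree on the bits `≥ j` and
their bit-reversals on the bits `≥ k - 1 - j`. Double counting the `k · 2 ^ (k - 1)` pairs gives
`2 · k · 2 ^ (k - 1) ≤ 4 · #arcs`.
-/

/-- Bit reversal of the `k`-bit binary representation of `x`. -/
def bitrev (k x : ℕ) : ℕ := ∑ i ∈ Finset.range k, if x.testBit i then 2 ^ (k - 1 - i) else 0

open Finset Relation

namespace Nat

theorem testBit_add_two_pow_of_testBit_eq_false {a j : ℕ} (h : a.testBit j = false) (i : ℕ) :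
    (a + 2 ^ j).testBit i = (a.testBit i || decide (j = i)) := by
  have hlow : a % 2 ^ (j + 1) < 2 ^ j := by
    by_contra! hge
    have := testBit_of_two_pow_le_and_two_pow_add_one_gt hge (mod_lt _ (by positivity))
    simp [testBit_mod_two_pow, h] at this
  have hlow' : a % 2 ^ (j + 1) + 2 ^ j < 2 ^ (j + 1) := by rw [Nat.pow_succ] at hlow ⊢; omega
  have ha := div_add_mod a (2 ^ (j + 1))
  conv_lhs => rw [← ha, add_assoc, testBit_two_pow_mul_add _ hlow']
  conv_rhs => rw [← ha, testBit_two_pow_mul_add _ (mod_lt _ (by positivity))]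
  split_ifs with hi
  · rw [← or_two_pow_eq_add_of_lt hlow, testBit_or, testBit_two_pow]
  · simp only [decide_eq_false (show j ≠ i by omega), Bool.or_false]

theorem xor_two_pow_eq_add_of_testBit_eq_false {a j : ℕ} (h : a.testBit j = false) :
    a ^^^ 2 ^ j = a + 2 ^ j :=
  eq_of_testBit_eq fun i => by
    rw [testBit_xor, testBit_two_pow, testBit_add_two_pow_of_testBit_eq_false h]
    by_cases hji : j = i
    · subst hji; simp [h]
    · simp [hji]

theorem testBit_eq_of_le_add_two_pow {x y j i : ℕ} (hx : x.testBit j = false)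
    (hy : y.testBit j = false) (hxy : x ≤ y + 2 ^ j) (hyx : y ≤ x + 2 ^ j) (hi : j ≤ i) :
    x.testBit i = y.testBit i := by
  have hdiv : x / 2 ^ j = y / 2 ^ j := by
    have h1 : x / 2 ^ j ≤ y / 2 ^ j + 1 :=
      (Nat.div_le_div_right hxy).trans_eq (add_div_right _ (by positivity))
    have h2 : y / 2 ^ j ≤ x / 2 ^ j + 1 :=
      (Nat.div_le_div_right hyx).trans_eq (add_div_right _ (by positivity))
    have ex : x / 2 ^ j % 2 = 0 := by
      simpa [testBit_div_two_pow, testBit_zero, hx] using testBit_div_two_pow (n := j) x 0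
    have ey : y / 2 ^ j % 2 = 0 := by
      simpa [testBit_div_two_pow, testBit_zero, hy] using testBit_div_two_pow (n := j) y 0
    omega
  obtain ⟨t, rfl⟩ := Nat.exists_eq_add_of_le' hi
  rw [← testBit_div_two_pow, ← testBit_div_two_pow, hdiv]

end Nat

theorem bitrev_succ (k x : ℕ) : bitrev (k + 1) x = 2 * bitrev k x + (x.testBit k).toNat := by
  rw [bitrev, sum_range_succ, bitrev, mul_sum]
  congr 1
  · refine sum_congr rfl fun i hi => ?_
    have : k + 1 - 1 - i = k - 1 - i + 1 := by have := mem_range.1 hi; omega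
    split_ifs
    · rw [this, pow_succ, mul_comm]
    · rfl
  · cases x.testBit k <;> simp

theorem testBit_bitrev (k x i : ℕ) :
    (bitrev k x).testBit i = (decide (i < k) && x.testBit (k - 1 - i)) := by
  induction k generalizing i with
  | zero => simp [bitrev]
  | succ k ih =>
    rw [bitrev_succ, show (2 : ℕ) = 2 ^ 1 by rfl,
      Nat.testBit_two_pow_mul_add _ (Bool.toNat_lt _)]
    rcases i with _ | i
    · cases h : x.testBit k <;> simp [h]
    · simp only [ih, show ¬ i + 1 < 1 by omega, if_false, Nat.add_sub_cancel,
        show k - (i + 1) = k - 1 - i by omega]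
      simp

theorem bitrev_add_two_pow {k j x : ℕ} (hj : j < k) (h : x.testBit j = false) :
    bitrev k (x + 2 ^ j) = bitrev k x + 2 ^ (k - 1 - j) := by
  have hrev : (bitrev k x).testBit (k - 1 - j) = false := by
    rw [testBit_bitrev, show k - 1 - (k - 1 - j) = j by omega, h, Bool.and_false]
  refine Nat.eq_of_testBit_eq fun i => ?_
  rw [testBit_bitrev, Nat.testBit_add_two_pow_of_testBit_eq_false h,
    Nat.testBit_add_two_pow_of_testBit_eq_false hrev, testBit_bitrev]
  by_cases hi : i < k
  · simp only [hi, decide_true, Bool.true_and]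
    congr 1
    exact decide_eq_decide.2 (by omega)
  · simp only [hi, decide_false, Bool.false_and, Bool.false_or]
    exact (decide_eq_false (by omega)).symm

theorem eq_of_le_add_two_pow_of_bitrev_le_add_two_pow {k j x y : ℕ} (hj : j < k)
    (hx : x.testBit j = false) (hy : y.testBit j = false)
    (hxy : x ≤ y + 2 ^ j) (hyx : y ≤ x + 2 ^ j)
    (hxy' : bitrev k x ≤ bitrev k y + 2 ^ (k - 1 - j))
    (hyx' : bitrev k y ≤ bitrev k x + 2 ^ (k - 1 - j)) : x = y := by
  have hrev : ∀ z, (bitrev k z).testBit (k - 1 - j) = z.testBit j := fun z => by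
    rw [testBit_bitrev, show k - 1 - (k - 1 - j) = j by omega]
    simp [show k - 1 - j < k by omega]
  refine Nat.eq_of_testBit_eq fun i => ?_
  rcases le_or_gt j i with hi | hi
  · exact Nat.testBit_eq_of_le_add_two_pow hx hy hxy hyx hi
  · have := Nat.testBit_eq_of_le_add_two_pow (i := k - 1 - i) ((hrev x).trans hx)
      ((hrev y).trans hy) hxy' hyx' (by omega)
    simpa [testBit_bitrev, show k - 1 - i < k by omega, show k - 1 - (k - 1 - i) = i by omega]
      using this

def flipBit {k : ℕ} (j : Fin k) (a : Fin (2 ^ k)) : Fin (2 ^ k) :=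
  ⟨a ^^^ 2 ^ (j : ℕ), Nat.xor_lt_two_pow a.isLt (Nat.pow_lt_pow_right one_lt_two j.isLt)⟩

@[simp]
theorem flipBit_flipBit {k : ℕ} (j : Fin k) (a : Fin (2 ^ k)) : flipBit j (flipBit j a) = a := by
  ext; simp [flipBit]

theorem testBit_flipBit {k : ℕ} (j : Fin k) (a : Fin (2 ^ k)) :
    (flipBit j a : ℕ).testBit j = !(a : ℕ).testBit j := by
  simp [flipBit, Nat.testBit_xor, Nat.testBit_two_pow_self]

theorem two_mul_card_filter_testBit_eq_false {k : ℕ} (j : Fin k) :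
    2 * #{a : Fin (2 ^ k) | (a : ℕ).testBit j = false} = 2 ^ k := by
  have hflip : #{a : Fin (2 ^ k) | (a : ℕ).testBit j = false}
      = #{a : Fin (2 ^ k) | ¬ (a : ℕ).testBit j = false} :=
    card_nbij' (flipBit j) (flipBit j) (fun a ha => by simp_all [testBit_flipBit])
      (fun a ha => by simp_all [testBit_flipBit]) (fun a _ => flipBit_flipBit j a)
      (fun a _ => flipBit_flipBit j a)
  rw [two_mul]
  nth_rw 2 [hflip]
  rw [card_filter_add_card_filter_not, card_univ, Fintype.card_fin]

theorem val_flipBit {k : ℕ} {j : Fin k} {a : Fin (2 ^ k)} (h : (a : ℕ).testBit j = false) :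
    (flipBit j a : ℕ) = a + 2 ^ (j : ℕ) :=
  Nat.xor_two_pow_eq_add_of_testBit_eq_false h

noncomputable def cappedRatio (x m : ℝ) : ℝ := if x ≤ m then x / m else 0

theorem cappedRatio_nonneg {x m : ℝ} (hx : 0 ≤ x) (hm : 0 ≤ m) : 0 ≤ cappedRatio x m := by
  unfold cappedRatio; split_ifs <;> positivity

theorem one_le_sum_cappedRatio {α : Type*} {s : Finset α} {x : α → ℝ} {m : ℝ} (hm : 0 < m)
    (hle : ∀ e ∈ s, x e ≤ m) (hsum : m ≤ ∑ e ∈ s, x e) : 1 ≤ ∑ e ∈ s, cappedRatio (x e) m := by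
  unfold cappedRatio
  rw [sum_congr rfl fun e he => if_pos (hle e he), ← sum_div, one_le_div hm]
  exact hsum

theorem sum_range_cappedRatio_two_pow_le {x : ℝ} (hx : 0 ≤ x) (K : ℕ) :
    ∑ j ∈ range K, cappedRatio x (2 ^ j) ≤ 2 := by
  set φ : ℕ → ℝ := fun j => 2 * min 1 (x / 2 ^ j)
  have hstep : ∀ j, cappedRatio x (2 ^ j) ≤ φ j - φ (j + 1) := fun j => by
    have h2 : (0 : ℝ) < 2 ^ j := by positivity
    unfold cappedRatio φ
    split_ifs with h
    · have h1 : x / 2 ^ j ≤ 1 := (div_le_one h2).2 h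
      have h1' : x / 2 ^ (j + 1) ≤ 1 := (div_le_one (by positivity)).2 (by rw [pow_succ]; linarith)
      rw [min_eq_right h1, min_eq_right h1', pow_succ]
      exact le_of_eq (by ring)
    · have : min 1 (x / 2 ^ (j + 1)) ≤ 1 := min_le_left _ _
      rw [min_eq_left ((one_le_div h2).2 (le_of_not_ge h))]
      linarith
  calc ∑ j ∈ range K, cappedRatio x (2 ^ j) ≤ ∑ j ∈ range K, (φ j - φ (j + 1)) :=
        sum_le_sum fun j _ => hstep j
    _ = φ 0 - φ K := sum_range_sub' φ K
    _ ≤ 2 := by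
        have : 0 ≤ φ K := by positivity
        have : φ 0 ≤ 2 := by simp only [φ]; linarith [min_le_left 1 (x / 2 ^ 0)]
        linarith

theorem sum_cappedRatio_two_pow_add_le {x y : ℝ} (hx : 0 ≤ x) (hy : 0 ≤ y) (k : ℕ) :
    ∑ j : Fin k, (cappedRatio x (2 ^ (j : ℕ)) + cappedRatio y (2 ^ (k - 1 - j))) ≤ 4 := by
  rw [Fin.sum_univ_eq_sum_range (fun j => cappedRatio x (2 ^ j) + cappedRatio y (2 ^ (k - 1 - j))),
    sum_add_distrib, sum_range_reflect (fun j => cappedRatio y (2 ^ j))]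
  linarith [sum_range_cappedRatio_two_pow_le hx k, sum_range_cappedRatio_two_pow_le hy k]

theorem mul_sum_card_le_mul_card {κ ι α : Type*} [DecidableEq α] {L : Finset κ}
    {A : κ → Finset ι} {S : κ → ι → Finset α} {E : Finset α} {w : κ → α → ℝ} {c C : ℝ}
    (hw : ∀ j ∈ L, ∀ e ∈ E, 0 ≤ w j e) (hSE : ∀ j ∈ L, ∀ a ∈ A j, S j a ⊆ E)
    (hdisj : ∀ j ∈ L, (A j : Set ι).PairwiseDisjoint (S j))
    (hc : ∀ j ∈ L, ∀ a ∈ A j, c ≤ ∑ e ∈ S j a, w j e) (hC : ∀ e ∈ E, ∑ j ∈ L, w j e ≤ C) :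
    c * ∑ j ∈ L, (#(A j) : ℝ) ≤ C * #E := by
  calc c * ∑ j ∈ L, (#(A j) : ℝ) = ∑ j ∈ L, ∑ a ∈ A j, c := by simp [mul_sum, mul_comm]
    _ ≤ ∑ j ∈ L, ∑ a ∈ A j, ∑ e ∈ S j a, w j e := sum_le_sum fun j hj => sum_le_sum (hc j hj)
    _ = ∑ j ∈ L, ∑ e ∈ (A j).biUnion (S j), w j e :=
        sum_congr rfl fun j hj => (sum_biUnion (hdisj j hj)).symm
    _ ≤ ∑ j ∈ L, ∑ e ∈ E, w j e := sum_le_sum fun j hj =>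
        sum_le_sum_of_subset_of_nonneg (biUnion_subset.2 (hSE j hj)) fun e he _ => hw j hj e he
    _ = ∑ e ∈ E, ∑ j ∈ L, w j e := sum_comm
    _ ≤ ∑ e ∈ E, C := sum_le_sum hC
    _ = C * #E := by simp [mul_comm]

section Potential

variable {V W : Type*} [Fintype V] (J : W → W → Prop) (ι : V → W) (f : V → ℕ)

open Classical in
noncomputable def reachMax (w : W) : ℕ := ({x | ReflTransGen J (ι x) w} : Finset V).sup f

variable {J ι f}

theorem le_reachMax {a : V} {w : W} (h : ReflTransGen J (ι a) w) : f a ≤ reachMax J ι f w := by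
  classical
  exact le_sup (f := f) (mem_filter.2 ⟨mem_univ a, h⟩)

theorem reachMax_le {w : W} {B : ℕ} (h : ∀ x, ReflTransGen J (ι x) w → f x ≤ B) :
    reachMax J ι f w ≤ B := by
  classical
  exact Finset.sup_le fun x hx => h x (mem_filter.1 hx).2

theorem reachMax_mono {u v : W} (h : ReflTransGen J u v) : reachMax J ι f u ≤ reachMax J ι f v :=
  reachMax_le fun _ hx => le_reachMax (hx.trans h)

theorem reachMax_eq {b : V} (hb : ∀ x, ReflTransGen J (ι x) (ι b) → f x ≤ f b) :
    reachMax J ι f (ι b) = f b :=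
  (reachMax_le hb).antisymm (le_reachMax ReflTransGen.refl)

variable (J ι f)

noncomputable def arcGain (e : W × W) : ℕ := reachMax J ι f e.2 - reachMax J ι f e.1

open Classical in
noncomputable def arcsBetween [Fintype W] (s t : W) : Finset (W × W) :=
  {e | J e.1 e.2 ∧ ReflTransGen J s e.1 ∧ ReflTransGen J e.2 t}

variable {J ι f} [Fintype W]

theorem arcGain_le_of_mem_arcsBetween {s t : W} {e : W × W} (he : e ∈ arcsBetween J s t) :
    arcGain J ι f e ≤ reachMax J ι f t - reachMax J ι f s := by
  classical
  obtain ⟨-, hs, ht⟩ := (mem_filter.1 he).2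
  have := reachMax_mono (ι := ι) (f := f) hs
  have := reachMax_mono (ι := ι) (f := f) ht
  unfold arcGain
  omega

theorem exists_subset_arcsBetween_reachMax_le {s t : W} (h : ReflTransGen J s t) :
    ∃ S ⊆ arcsBetween J s t, reachMax J ι f t ≤ reachMax J ι f s + ∑ e ∈ S, arcGain J ι f e := by
  classical
  induction h with
  | refl => exact ⟨∅, empty_subset _, by simp⟩
  | @tail u t hsu hut ih =>
    obtain ⟨S, hS, hle⟩ := ih
    have hsub : arcsBetween J s u ⊆ arcsBetween J s t := fun e he => by
      simp only [arcsBetween, mem_filter, mem_univ, true_and] at he ⊢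
      exact ⟨he.1, he.2.1, he.2.2.tail hut⟩
    -- an arc already in `S` closes a cycle through `t`, so the potential cannot rise along it
    by_cases hmem : (u, t) ∈ S
    · have htu : ReflTransGen J t u := (mem_filter.1 (hS hmem)).2.2.2
      exact ⟨S, hS.trans hsub, (reachMax_mono htu).trans hle⟩
    · refine ⟨insert (u, t) S, insert_subset ?_ (hS.trans hsub), ?_⟩
      · simp [arcsBetween, hut, hsu, ReflTransGen.refl]
      · have := reachMax_mono (ι := ι) (f := f) (ReflTransGen.single hut)
        rw [sum_insert hmem, arcGain]
        dsimp only
        omega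

theorem reachMax_sub_le_sum_arcGain {s t : W} (h : ReflTransGen J s t) :
    reachMax J ι f t - reachMax J ι f s ≤ ∑ e ∈ arcsBetween J s t, arcGain J ι f e := by
  obtain ⟨S, hS, hle⟩ := exists_subset_arcsBetween_reachMax_le (ι := ι) (f := f) h
  have := sum_le_sum_of_subset hS (f := arcGain J ι f)
  omega

theorem one_le_sum_cappedRatio_arcGain (hf : ∀ x y, ReflTransGen J (ι x) (ι y) → f x ≤ f y) {a b : V}
    (hab : ReflTransGen J (ι a) (ι b)) (hlt : f a < f b) :
    1 ≤ ∑ e ∈ arcsBetween J (ι a) (ι b), cappedRatio (arcGain J ι f e) ((f b - f a : ℕ) : ℝ) := by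
  have hpot : ∀ y, reachMax J ι f (ι y) = f y := fun y => reachMax_eq fun x hx => hf x y hx
  have hgain := reachMax_sub_le_sum_arcGain (ι := ι) (f := f) hab
  rw [hpot, hpot] at hgain
  refine one_le_sum_cappedRatio (by exact_mod_cast Nat.sub_pos_of_lt hlt) (fun e he => ?_)
    (by exact_mod_cast hgain)
  have := arcGain_le_of_mem_arcsBetween (ι := ι) (f := f) he
  rw [hpot, hpot] at this
  exact_mod_cast this

end Potential

def RealizesBitrevJoin (k : ℕ) {W : Type*} (J : W → W → Prop) (ι : Fin (2 ^ k) → W) : Prop :=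
  ∀ a b : Fin (2 ^ k), ReflTransGen J (ι a) (ι b) ↔ ((a : ℕ) ≤ b ∧ bitrev k a ≤ bitrev k b)

namespace RealizesBitrevJoin

variable {k : ℕ} {W : Type*} {J : W → W → Prop} {ι : Fin (2 ^ k) → W}

theorem two_le_sum_cappedRatio [Fintype W] (h : RealizesBitrevJoin k J ι) {j : Fin k}
    {a : Fin (2 ^ k)} (ha : (a : ℕ).testBit j = false) :
    2 ≤ ∑ e ∈ arcsBetween J (ι a) (ι (flipBit j a)),
      (cappedRatio (arcGain J ι Fin.val e) (2 ^ (j : ℕ)) +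
        cappedRatio (arcGain J ι (fun x => bitrev k x) e) (2 ^ (k - 1 - j))) := by
  have hrev := bitrev_add_two_pow j.isLt ha
  have hreach := (h a (flipBit j a)).2 (by simp [val_flipBit ha, hrev])
  have hsum_val := one_le_sum_cappedRatio_arcGain (f := Fin.val)
    (fun x y hxy => ((h x y).1 hxy).1) hreach (by simp [val_flipBit ha])
  have hsum_rev := one_le_sum_cappedRatio_arcGain (f := fun x : Fin (2 ^ k) => bitrev k x)
    (fun x y hxy => ((h x y).1 hxy).2) hreach (by simp [val_flipBit ha, hrev])
  simp only [val_flipBit ha, hrev, Nat.add_sub_cancel_left, Nat.cast_pow,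
    Nat.cast_ofNat] at hsum_val hsum_rev
  rw [sum_add_distrib]
  linarith

theorem eq_of_mem_arcsBetween_flipBit [Fintype W] (h : RealizesBitrevJoin k J ι) {j : Fin k}
    {a c : Fin (2 ^ k)} (ha : (a : ℕ).testBit j = false) (hc : (c : ℕ).testBit j = false)
    {e : W × W} (hea : e ∈ arcsBetween J (ι a) (ι (flipBit j a)))
    (hec : e ∈ arcsBetween J (ι c) (ι (flipBit j c))) : a = c := by
  classical
  obtain ⟨hJ, ha1, ha2⟩ := (mem_filter.1 hea).2
  obtain ⟨-, hc1, hc2⟩ := (mem_filter.1 hec).2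
  have hac := (h _ _).1 (ha1.trans ((ReflTransGen.single hJ).trans hc2))
  have hca := (h _ _).1 (hc1.trans ((ReflTransGen.single hJ).trans ha2))
  rw [val_flipBit hc, bitrev_add_two_pow j.isLt hc] at hac
  rw [val_flipBit ha, bitrev_add_two_pow j.isLt ha] at hca
  exact Fin.ext (eq_of_le_add_two_pow_of_bitrev_le_add_two_pow j.isLt ha hc hac.1 hca.1 hac.2 hca.2)

theorem mul_two_pow_le_ncard [Fintype W] (h : RealizesBitrevJoin k J ι) :
    (k * 2 ^ k : ℝ) ≤ 4 * {e : W × W | J e.1 e.2}.ncard := by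
  classical
  set E : Finset (W × W) := {e | J e.1 e.2}
  have hE : {e : W × W | J e.1 e.2}.ncard = #E := by
    rw [← Set.ncard_coe_finset]; congr; ext; simp [E]
  have hcount := mul_sum_card_le_mul_card (L := univ) (E := E) (c := 2) (C := 4)
    (A := fun j : Fin k => {a : Fin (2 ^ k) | (a : ℕ).testBit j = false})
    (S := fun j a => arcsBetween J (ι a) (ι (flipBit j a)))
    (w := fun j e => cappedRatio (arcGain J ι Fin.val e) (2 ^ (j : ℕ)) +
        cappedRatio (arcGain J ι (fun x => bitrev k x) e) (2 ^ (k - 1 - j)))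
    (fun _ _ _ _ => add_nonneg (cappedRatio_nonneg (Nat.cast_nonneg _) (by positivity))
      (cappedRatio_nonneg (Nat.cast_nonneg _) (by positivity)))
    (fun _ _ _ _ e he => by simp [E, (mem_filter.1 he).2.1])
    (fun _ _ _ ha _ hc hne => disjoint_left.2 fun _ hea hec =>
      hne (h.eq_of_mem_arcsBetween_flipBit (mem_filter.1 ha).2 (mem_filter.1 hc).2 hea hec))
    (fun _ _ _ ha => h.two_le_sum_cappedRatio (mem_filter.1 ha).2)
    (fun _ _ => sum_cappedRatio_two_pow_add_le (Nat.cast_nonneg _) (Nat.cast_nonneg _) k)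
  have hA : ∀ j : Fin k, (2 : ℝ) * #{a : Fin (2 ^ k) | (a : ℕ).testBit j = false} = 2 ^ k :=
    fun j => by exact_mod_cast two_mul_card_filter_testBit_eq_false j
  simp only [mul_sum, hA, sum_const, card_univ, Fintype.card_fin, nsmul_eq_mul] at hcount
  rwa [hE]

end RealizesBitrevJoin

/-- Lower bound: there is a constant `c > 0` such that for every `n = 2^k`
there are two directed paths on `n` vertices (the identity order and the
bit-reversal order on `{0, …, n-1}`) such that every digraph `J` (possibly
with Steiner vertices) whose reachability relation restricted to the original
vertices realizes the join-reachability relation has size (vertices plus arcs)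
at least `c · n · log₂ n`. -/
theorem stmt_7 :
    ∃ c : ℝ, 0 < c ∧
      ∀ (k : ℕ) (W : Type) (instW : Fintype W) (J : W → W → Prop) (ι : Fin (2 ^ k) → W),
        Function.Injective ι →
        (∀ a b : Fin (2 ^ k),
          (Relation.ReflTransGen J (ι a) (ι b) ↔
            ((a : ℕ) ≤ (b : ℕ) ∧ bitrev k (a : ℕ) ≤ bitrev k (b : ℕ)))) →
        c * ((2 ^ k * k : ℕ) : ℝ) ≤
          ((@Fintype.card W instW : ℝ) + ({p : W × W | J p.1 p.2}.ncard : ℝ)) := by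
  refine ⟨1 / 4, by norm_num, fun k W _ J ι _ hJ => ?_⟩
  have := RealizesBitrevJoin.mul_two_pow_le_ncard hJ
  have : (0 : ℝ) ≤ Fintype.card W := Nat.cast_nonneg _
  push_cast
  linarith
end

section
/- Let G1, G2 be directed paths on n vertices (n a power of 2), with vertices identified with grid points (x1(a), x2(a)) in rank space. The divide-and-conquer construction that recursively splits on the median x1-coordinate and, at each level, adds one Steiner vertex per right-side vertex connected into a chain ordered by x2-coordinate (with arcs from left-side vertices to the appropriate Steiner vertex), produces a digraph J with O(n log n) vertices and arcs whose reachability relation restricted to V satisfies: a ⇝_J b iff x1(a) ≤ x1(b) and x2(a) ≤ x2(b). -/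
open Relation

namespace Stmt8

/-- bit `s` of `p` is one -/
def R (s p : ℕ) : Prop := p / 2 ^ s % 2 = 1

/-- the node at scale `s` containing `p` -/
def nd (s p : ℕ) : ℕ := p / 2 ^ (s + 1)

def E1 (k u v : ℕ) : Prop :=
  1 ≤ u / 2 ^ k ∧ v / 2 ^ k = 0 ∧ v % 2 ^ k = u % 2 ^ k ∧ R (u / 2 ^ k - 1) (u % 2 ^ k)

def E2 (k : ℕ) (x2 : ℕ → ℕ) (u v : ℕ) : Prop :=
  1 ≤ u / 2 ^ k ∧ v / 2 ^ k = u / 2 ^ k ∧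
  nd (u / 2 ^ k - 1) (v % 2 ^ k) = nd (u / 2 ^ k - 1) (u % 2 ^ k) ∧
  R (u / 2 ^ k - 1) (u % 2 ^ k) ∧ R (u / 2 ^ k - 1) (v % 2 ^ k) ∧
  x2 (u % 2 ^ k) < x2 (v % 2 ^ k) ∧
  ∀ q < 2 ^ k, nd (u / 2 ^ k - 1) q = nd (u / 2 ^ k - 1) (u % 2 ^ k) →
    R (u / 2 ^ k - 1) q → x2 (u % 2 ^ k) < x2 q → x2 (v % 2 ^ k) ≤ x2 q

def E3 (k : ℕ) (x2 : ℕ → ℕ) (u v : ℕ) : Prop :=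
  u / 2 ^ k = 0 ∧ 1 ≤ v / 2 ^ k ∧
  nd (v / 2 ^ k - 1) (v % 2 ^ k) = nd (v / 2 ^ k - 1) (u % 2 ^ k) ∧
  ¬ R (v / 2 ^ k - 1) (u % 2 ^ k) ∧ R (v / 2 ^ k - 1) (v % 2 ^ k) ∧
  x2 (u % 2 ^ k) ≤ x2 (v % 2 ^ k) ∧
  ∀ q < 2 ^ k, nd (v / 2 ^ k - 1) q = nd (v / 2 ^ k - 1) (u % 2 ^ k) →
    R (v / 2 ^ k - 1) q → x2 (u % 2 ^ k) ≤ x2 q → x2 (v % 2 ^ k) ≤ x2 q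

def J (k : ℕ) (x2 : ℕ → ℕ) (u v : Fin ((k + 1) * 2 ^ k)) : Prop :=
  E1 k u.val v.val ∨ E2 k x2 u.val v.val ∨ E3 k x2 u.val v.val

/-- original vertex -/
def Ov (k p : ℕ) (hp : p < 2 ^ k) : Fin ((k + 1) * 2 ^ k) :=
  ⟨p, lt_of_lt_of_le hp (Nat.le_mul_of_pos_left _ k.succ_pos)⟩

/-- Steiner vertex at scale `s` for point `r` -/
def Sv (k s r : ℕ) (hs : s < k) (hr : r < 2 ^ k) : Fin ((k + 1) * 2 ^ k) :=
  ⟨2 ^ k * (s + 1) + r, by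
    calc 2 ^ k * (s + 1) + r < 2 ^ k * (s + 1) + 2 ^ k := by omega
    _ = 2 ^ k * (s + 2) := by ring
    _ ≤ 2 ^ k * (k + 1) := Nat.mul_le_mul_left _ (by omega)
    _ = (k + 1) * 2 ^ k := Nat.mul_comm _ _⟩

lemma Ov_div (k p : ℕ) (hp : p < 2 ^ k) : (Ov k p hp).val / 2 ^ k = 0 :=
  Nat.div_eq_of_lt hp

lemma Ov_mod (k p : ℕ) (hp : p < 2 ^ k) : (Ov k p hp).val % 2 ^ k = p :=
  Nat.mod_eq_of_lt hp

lemma Sv_div (k s r : ℕ) (hs : s < k) (hr : r < 2 ^ k) :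
    (Sv k s r hs hr).val / 2 ^ k = s + 1 := by
  show (2 ^ k * (s + 1) + r) / 2 ^ k = s + 1
  rw [Nat.mul_add_div (Nat.two_pow_pos k), Nat.div_eq_of_lt hr]

lemma Sv_mod (k s r : ℕ) (hs : s < k) (hr : r < 2 ^ k) :
    (Sv k s r hs hr).val % 2 ^ k = r := by
  show (2 ^ k * (s + 1) + r) % 2 ^ k = r
  rw [Nat.mul_add_mod, Nat.mod_eq_of_lt hr]

lemma div_pow_succ (p s : ℕ) : p / 2 ^ (s + 1) = p / 2 ^ s / 2 := by
  rw [Nat.div_div_eq_div_mul, pow_succ]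

lemma bit_split (s p : ℕ) : p / 2 ^ s = 2 * (p / 2 ^ (s + 1)) + p / 2 ^ s % 2 := by
  rw [div_pow_succ]; omega


def phi1 (k u : ℕ) : ℕ :=
  if u / 2 ^ k = 0 then u % 2 ^ k
  else u % 2 ^ k / 2 ^ (u / 2 ^ k - 1) * 2 ^ (u / 2 ^ k - 1)

lemma mono (k : ℕ) (x2 : ℕ → ℕ) (u v : Fin ((k + 1) * 2 ^ k)) (h : J k x2 u v) :
    phi1 k u.val ≤ phi1 k v.val ∧ x2 (u.val % 2 ^ k) ≤ x2 (v.val % 2 ^ k) := by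
  rcases h with h | h | h
  · -- E1
    obtain ⟨h1, h2, h3, _⟩ := h
    constructor
    · rw [phi1, phi1, if_neg (by omega), if_pos h2, h3]
      exact Nat.div_mul_le_self _ _
    · rw [h3]
  · -- E2
    obtain ⟨h1, h2, h3, h4, h5, h6, _⟩ := h
    refine ⟨?_, le_of_lt h6⟩
    rw [phi1, phi1, if_neg (by omega), if_neg (by omega), h2]
    set s := u.val / 2 ^ k - 1 with hs
    have e1 := bit_split s (u.val % 2 ^ k)
    have e2 := bit_split s (v.val % 2 ^ k)
    unfold R at h4 h5
    unfold nd at h3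
    have : v.val % 2 ^ k / 2 ^ s = u.val % 2 ^ k / 2 ^ s := by omega
    rw [this]
  · -- E3
    obtain ⟨h1, h2, h3, h4, h5, h6, _⟩ := h
    refine ⟨?_, h6⟩
    rw [phi1, phi1, if_pos h1, if_neg (by omega)]
    set s := v.val / 2 ^ k - 1 with hs
    set p := u.val % 2 ^ k with hp
    set q := v.val % 2 ^ k with hq
    have e1 := bit_split s p
    have e2 := bit_split s q
    unfold R at h4 h5
    unfold nd at h3
    have hm2 : p / 2 ^ s % 2 = 0 := by omega
    have hqd : q / 2 ^ s = p / 2 ^ s + 1 := by omega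
    have hdm := Nat.div_add_mod p (2 ^ s)
    have hml : p % 2 ^ s < 2 ^ s := Nat.mod_lt _ (Nat.two_pow_pos s)
    refine le_of_lt ?_
    calc p < 2 ^ s * (p / 2 ^ s) + 2 ^ s := by omega
    _ = (p / 2 ^ s + 1) * 2 ^ s := by ring
    _ = q / 2 ^ s * 2 ^ s := by rw [hqd]

lemma forward (k : ℕ) (x2 : ℕ → ℕ) (p q : ℕ) (hp : p < 2 ^ k) (hq : q < 2 ^ k)
    (h : ReflTransGen (J k x2) (Ov k p hp) (Ov k q hq)) : p ≤ q ∧ x2 p ≤ x2 q := by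
  have key : ∀ v : Fin ((k + 1) * 2 ^ k), ReflTransGen (J k x2) (Ov k p hp) v →
      phi1 k (Ov k p hp).val ≤ phi1 k v.val ∧
      x2 ((Ov k p hp).val % 2 ^ k) ≤ x2 (v.val % 2 ^ k) := by
    intro v hv
    induction hv with
    | refl => exact ⟨le_refl _, le_refl _⟩
    | tail _ e ih =>
      have := mono k x2 _ _ e
      exact ⟨le_trans ih.1 this.1, le_trans ih.2 this.2⟩
  have := key _ h
  rw [Ov_mod, Ov_mod] at this
  refine ⟨?_, this.2⟩
  have h1 := this.1
  rw [phi1, phi1, if_pos (Ov_div k p hp), if_pos (Ov_div k q hq), Ov_mod, Ov_mod] at h1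
  exact h1

lemma chain (k : ℕ) (x2 : ℕ → ℕ)
    (hinj : ∀ p < 2 ^ k, ∀ q < 2 ^ k, x2 p = x2 q → p = q)
    (s : ℕ) (hs : s < k) (r' : ℕ) (hr' : r' < 2 ^ k) (hRr' : R s r') :
    ∀ d r, ∀ hr : r < 2 ^ k, nd s r = nd s r' → R s r → x2 r ≤ x2 r' →
      x2 r' - x2 r ≤ d →
      ReflTransGen (J k x2) (Sv k s r hs hr) (Sv k s r' hs hr') := by
  classical
  intro d
  induction d with
  | zero =>
    intro r hr hnode hR hle hd
    have : x2 r = x2 r' := by omega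
    have : r = r' := hinj r hr r' hr' this
    subst this
    exact ReflTransGen.refl
  | succ d ih =>
    intro r hr hnode hR hle hd
    by_cases heq : r = r'
    · subst heq; exact ReflTransGen.refl
    · have hlt : x2 r < x2 r' := lt_of_le_of_ne hle (fun e => heq (hinj r hr r' hr' e))
      set T : Finset ℕ := (Finset.range (2 ^ k)).filter
        (fun t => nd s t = nd s r' ∧ R s t ∧ x2 r < x2 t) with hT
      have hr'T : r' ∈ T := by
        rw [hT]; simp only [Finset.mem_filter, Finset.mem_range]
        exact ⟨hr', by trivial, hRr', hlt⟩
      obtain ⟨r'', hmem, hmin⟩ := Finset.exists_min_image T x2 ⟨r', hr'T⟩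
      rw [hT] at hmem
      simp only [Finset.mem_filter, Finset.mem_range] at hmem
      obtain ⟨hr''lt, hnode'', hR'', hx''⟩ := hmem
      have edge : J k x2 (Sv k s r hs hr) (Sv k s r'' hs hr''lt) := by
        refine Or.inr (Or.inl ?_)
        unfold E2
        rw [Sv_div, Sv_div, Sv_mod, Sv_mod]
        simp only [Nat.add_sub_cancel]
        refine ⟨by omega, by trivial, by rw [hnode'', hnode], hR, hR'', hx'', ?_⟩
        intro t ht hndt hRt hxt
        have hmT : t ∈ T := by
          rw [hT]
          simp only [Finset.mem_filter, Finset.mem_range]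
          exact ⟨ht, by rw [hndt, hnode], hRt, hxt⟩
        exact hmin t hmT
      have hle'' : x2 r'' ≤ x2 r' := hmin r' hr'T
      refine ReflTransGen.head edge (ih r'' hr''lt hnode'' hR'' hle'' (by omega))

lemma reach (k : ℕ) (x2 : ℕ → ℕ)
    (hinj : ∀ p < 2 ^ k, ∀ q < 2 ^ k, x2 p = x2 q → p = q)
    (p q : ℕ) (hp : p < 2 ^ k) (hq : q < 2 ^ k) (hpq : p ≤ q) (hx : x2 p ≤ x2 q) :
    ReflTransGen (J k x2) (Ov k p hp) (Ov k q hq) := by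
  classical
  by_cases heq : p = q
  · subst heq; exact ReflTransGen.refl
  have hlt : p < q := lt_of_le_of_ne hpq heq
  -- find the splitting scale s
  have hPk : p / 2 ^ k = q / 2 ^ k := by
    rw [Nat.div_eq_of_lt hp, Nat.div_eq_of_lt hq]
  have hex : ∃ t, p / 2 ^ t = q / 2 ^ t := ⟨k, hPk⟩
  set t0 := Nat.find hex with ht0
  have ht0spec : p / 2 ^ t0 = q / 2 ^ t0 := Nat.find_spec hex
  have ht0pos : 1 ≤ t0 := by
    rcases Nat.eq_zero_or_pos t0 with h | h
    · exfalso; rw [h] at ht0spec; simp at ht0spec; omega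
    · exact h
  set s := t0 - 1 with hsdef
  have hst0 : s + 1 = t0 := by omega
  have hsk : s < k := by
    have : t0 ≤ k := Nat.find_le hPk
    by_contra hc
    have hsk' : k ≤ s := by omega
    have := Nat.find_min hex (m := s) (by omega)
    omega
  have hnot : p / 2 ^ s ≠ q / 2 ^ s := Nat.find_min hex (by omega)
  have hnd : nd s p = nd s q := by unfold nd; rw [hst0]; exact ht0spec
  -- bits
  have e1 := bit_split s p
  have e2 := bit_split s q
  have hmono : p / 2 ^ s ≤ q / 2 ^ s := Nat.div_le_div_right hpq
  have hndeq : p / 2 ^ (s+1) = q / 2 ^ (s+1) := by rw [hst0]; exact ht0spec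
  have hm1 : p / 2 ^ s % 2 < 2 := Nat.mod_lt _ (by omega)
  have hm2 : q / 2 ^ s % 2 < 2 := Nat.mod_lt _ (by omega)
  have hbp : p / 2 ^ s % 2 = 0 := by omega
  have hbq : q / 2 ^ s % 2 = 1 := by omega
  have hRp : ¬ R s p := by unfold R; omega
  have hRq : R s q := hbq
  -- argmin r0
  set T : Finset ℕ := (Finset.range (2 ^ k)).filter
    (fun t => nd s t = nd s p ∧ R s t ∧ x2 p ≤ x2 t) with hT
  have hqT : q ∈ T := by
    rw [hT]; simp only [Finset.mem_filter, Finset.mem_range]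
    exact ⟨hq, hnd.symm, hRq, hx⟩
  obtain ⟨r0, hmem, hmin⟩ := Finset.exists_min_image T x2 ⟨q, hqT⟩
  rw [hT] at hmem
  simp only [Finset.mem_filter, Finset.mem_range] at hmem
  obtain ⟨hr0lt, hnd0, hR0, hx0⟩ := hmem
  -- edge p -> Sv s r0
  have edge1 : J k x2 (Ov k p hp) (Sv k s r0 hsk hr0lt) := by
    refine Or.inr (Or.inr ?_)
    unfold E3
    rw [Ov_div, Ov_mod, Sv_div, Sv_mod]
    simp only [Nat.add_sub_cancel]
    refine ⟨by trivial, by omega, by rw [hnd0], hRp, hR0, hx0, ?_⟩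
    intro t ht hndt hRt hxt
    have hmT : t ∈ T := by
      rw [hT]
      simp only [Finset.mem_filter, Finset.mem_range]
      exact ⟨ht, hndt, hRt, hxt⟩
    exact hmin t hmT
  -- chain Sv s r0 -> Sv s q
  have hchain := chain k x2 hinj s hsk q hq hRq (x2 q - x2 r0) r0 hr0lt
    (by rw [hnd0, hnd]) hR0 (hmin q hqT) (le_refl _)
  -- edge Sv s q -> q
  have edge2 : J k x2 (Sv k s q hsk hq) (Ov k q hq) := by
    refine Or.inl ?_
    unfold E1
    rw [Ov_div, Ov_mod, Sv_div, Sv_mod]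
    simp only [Nat.add_sub_cancel]
    exact ⟨by omega, by trivial, by trivial, hRq⟩
  exact ReflTransGen.head edge1 (hchain.trans (ReflTransGen.tail ReflTransGen.refl edge2))

lemma ncard_Iio (N : ℕ) : (Set.Iio N : Set ℕ).ncard = N := by
  simp [Set.ncard_eq_toFinset_card']

lemma lt_of_lev_zero (k v : ℕ) (h : v / 2 ^ k = 0) : v < 2 ^ k := by
  by_contra hc
  push_neg at hc
  have : 1 ≤ v / 2 ^ k := (Nat.one_le_div_iff (Nat.two_pow_pos k)).mpr hc
  omega

lemma E1_unique (k : ℕ) (u v v' : ℕ) (h : E1 k u v) (h' : E1 k u v') : v = v' := by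
  obtain ⟨_, h2, h3, _⟩ := h
  obtain ⟨_, h2', h3', _⟩ := h'
  have hv : v < 2 ^ k := lt_of_lev_zero k _ h2
  have hv' : v' < 2 ^ k := lt_of_lev_zero k _ h2'
  rw [Nat.mod_eq_of_lt hv] at h3
  rw [Nat.mod_eq_of_lt hv'] at h3'
  omega

lemma E2_unique (k : ℕ) (x2 : ℕ → ℕ)
    (hinj : ∀ p < 2 ^ k, ∀ q < 2 ^ k, x2 p = x2 q → p = q)
    (u v v' : ℕ) (h : E2 k x2 u v) (h' : E2 k x2 u v') : v = v' := by
  obtain ⟨h1, h2, h3, h4, h5, h6, h7⟩ := h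
  obtain ⟨h1', h2', h3', h4', h5', h6', h7'⟩ := h'
  have hm : v % 2 ^ k < 2 ^ k := Nat.mod_lt _ (Nat.two_pow_pos k)
  have hm' : v' % 2 ^ k < 2 ^ k := Nat.mod_lt _ (Nat.two_pow_pos k)
  have a1 : x2 (v % 2 ^ k) ≤ x2 (v' % 2 ^ k) := h7 _ hm' h3' h5' h6'
  have a2 : x2 (v' % 2 ^ k) ≤ x2 (v % 2 ^ k) := h7' _ hm h3 h5 h6
  have : v % 2 ^ k = v' % 2 ^ k := hinj _ hm _ hm' (le_antisymm a1 a2)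
  have hd : v / 2 ^ k = v' / 2 ^ k := by omega
  have d1 := Nat.div_add_mod v (2 ^ k)
  have d2 := Nat.div_add_mod v' (2 ^ k)
  rw [hd] at d1
  omega

lemma E3_unique (k : ℕ) (x2 : ℕ → ℕ)
    (hinj : ∀ p < 2 ^ k, ∀ q < 2 ^ k, x2 p = x2 q → p = q)
    (u v v' : ℕ) (h : E3 k x2 u v) (h' : E3 k x2 u v')
    (hl : v / 2 ^ k = v' / 2 ^ k) : v = v' := by
  obtain ⟨h1, h2, h3, h4, h5, h6, h7⟩ := h
  obtain ⟨h1', h2', h3', h4', h5', h6', h7'⟩ := h'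
  rw [← hl] at h3' h5' h7'
  have hm : v % 2 ^ k < 2 ^ k := Nat.mod_lt _ (Nat.two_pow_pos k)
  have hm' : v' % 2 ^ k < 2 ^ k := Nat.mod_lt _ (Nat.two_pow_pos k)
  have a1 : x2 (v % 2 ^ k) ≤ x2 (v' % 2 ^ k) := h7 _ hm' h3' h5' h6'
  have a2 : x2 (v' % 2 ^ k) ≤ x2 (v % 2 ^ k) := h7' _ hm h3 h5 h6
  have : v % 2 ^ k = v' % 2 ^ k := hinj _ hm _ hm' (le_antisymm a1 a2)
  have d1 := Nat.div_add_mod v (2 ^ k)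
  have d2 := Nat.div_add_mod v' (2 ^ k)
  rw [hl] at d1
  omega

lemma count (k : ℕ) (x2 : ℕ → ℕ)
    (hinj : ∀ p < 2 ^ k, ∀ q < 2 ^ k, x2 p = x2 q → p = q) :
    {e : Fin ((k + 1) * 2 ^ k) × Fin ((k + 1) * 2 ^ k) | J k x2 e.1 e.2}.ncard
      ≤ 2 * ((k + 1) * 2 ^ k) + k * 2 ^ k := by
  classical
  set m := (k + 1) * 2 ^ k with hm
  set T1 : Set (Fin m × Fin m) := {e | E1 k e.1.val e.2.val} with hT1
  set T2 : Set (Fin m × Fin m) := {e | E2 k x2 e.1.val e.2.val} with hT2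
  set T3 : Set (Fin m × Fin m) := {e | E3 k x2 e.1.val e.2.val} with hT3
  have hsub : {e : Fin m × Fin m | J k x2 e.1 e.2} ⊆ T1 ∪ T2 ∪ T3 := by
    intro e he
    rcases he with h | h | h
    · exact Or.inl (Or.inl h)
    · exact Or.inl (Or.inr h)
    · exact Or.inr h
  have c1 : T1.ncard ≤ m := by
    have := Set.ncard_le_ncard_of_injOn (fun e => e.1.val) (t := Set.Iio m)
      (fun e _ => e.1.isLt) (s := T1) ?_ (Set.finite_Iio m)
    · rwa [ncard_Iio] at this
    · intro e he e' he' hee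
      have hee' : (e.1 : ℕ) = (e'.1 : ℕ) := hee
      have heE' : E1 k e'.1.val e'.2.val := he'
      rw [← hee'] at heE'
      have h2 := E1_unique k e.1.val e.2.val e'.2.val he heE'
      exact Prod.ext (Fin.ext hee') (Fin.ext h2)
  have c2 : T2.ncard ≤ m := by
    have := Set.ncard_le_ncard_of_injOn (fun e => e.1.val) (t := Set.Iio m)
      (fun e _ => e.1.isLt) (s := T2) ?_ (Set.finite_Iio m)
    · rwa [ncard_Iio] at this
    · intro e he e' he' hee
      have hee' : (e.1 : ℕ) = (e'.1 : ℕ) := hee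
      have heE' : E2 k x2 e'.1.val e'.2.val := he'
      rw [← hee'] at heE'
      have h2 := E2_unique k x2 hinj e.1.val e.2.val e'.2.val he heE'
      exact Prod.ext (Fin.ext hee') (Fin.ext h2)
  have c3 : T3.ncard ≤ k * 2 ^ k := by
    have hmap : ∀ e ∈ T3, (e.2.val / 2 ^ k - 1) * 2 ^ k + e.1.val ∈ Set.Iio (k * 2 ^ k) := by
      intro e he
      obtain ⟨h1, h2, _⟩ := he
      have hu : e.1.val < 2 ^ k := lt_of_lev_zero k _ h1
      have hvk : e.2.val / 2 ^ k < k + 1 := by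
        rw [Nat.div_lt_iff_lt_mul (Nat.two_pow_pos k)]
        calc (e.2.val : ℕ) < m := e.2.isLt
        _ = (k + 1) * 2 ^ k := hm
        _ = 2 ^ k * (k+1) := Nat.mul_comm _ _
        _ ≤ (k + 1) * 2 ^ k := le_of_eq (Nat.mul_comm _ _)
      have hk1 : 1 ≤ k := by omega
      have : (e.2.val / 2 ^ k - 1) ≤ k - 1 := by omega
      calc (e.2.val / 2 ^ k - 1) * 2 ^ k + e.1.val
          < (e.2.val / 2 ^ k - 1) * 2 ^ k + 2 ^ k := by omega
      _ = (e.2.val / 2 ^ k - 1 + 1) * 2 ^ k := by ring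
      _ ≤ k * 2 ^ k := Nat.mul_le_mul_right _ (by omega)
    have := Set.ncard_le_ncard_of_injOn
      (fun e => (e.2.val / 2 ^ k - 1) * 2 ^ k + e.1.val) (t := Set.Iio (k * 2 ^ k))
      hmap (s := T3) ?_ (Set.finite_Iio _)
    · rwa [ncard_Iio] at this
    · intro e he e' he' hee
      have hu : e.1.val < 2 ^ k := lt_of_lev_zero k _ he.1
      have hu' : e'.1.val < 2 ^ k := lt_of_lev_zero k _ he'.1
      have hee' : (e.2.val / 2 ^ k - 1) * 2 ^ k + e.1.val
          = (e'.2.val / 2 ^ k - 1) * 2 ^ k + e'.1.val := hee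
      have dec : ∀ a u : ℕ, u < 2 ^ k → (a * 2 ^ k + u) % 2 ^ k = u ∧
          (a * 2 ^ k + u) / 2 ^ k = a := by
        intro a u hult
        constructor
        · rw [Nat.add_comm, Nat.add_mul_mod_self_right, Nat.mod_eq_of_lt hult]
        · rw [Nat.add_comm, Nat.add_mul_div_right _ _ (Nat.two_pow_pos k),
            Nat.div_eq_of_lt hult, Nat.zero_add]
      have q1 := dec (e.2.val / 2 ^ k - 1) e.1.val hu
      have q2 := dec (e'.2.val / 2 ^ k - 1) e'.1.val hu'
      have hu_eq : e.1.val = e'.1.val := by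
        rw [← q1.1, hee', q2.1]
      have ha_eq : e.2.val / 2 ^ k - 1 = e'.2.val / 2 ^ k - 1 := by
        rw [← q1.2, hee', q2.2]
      have hlev : e.2.val / 2 ^ k = e'.2.val / 2 ^ k := by
        have g1 : 1 ≤ e.2.val / 2 ^ k := he.2.1
        have g2 : 1 ≤ e'.2.val / 2 ^ k := he'.2.1
        omega
      have heE' : E3 k x2 e'.1.val e'.2.val := he'
      rw [← hu_eq] at heE'
      have h2 := E3_unique k x2 hinj e.1.val e.2.val e'.2.val he heE' hlev
      exact Prod.ext (Fin.ext hu_eq) (Fin.ext h2)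
  calc _ ≤ (T1 ∪ T2 ∪ T3).ncard := Set.ncard_le_ncard hsub (Set.toFinite _)
  _ ≤ (T1 ∪ T2).ncard + T3.ncard := Set.ncard_union_le _ _
  _ ≤ T1.ncard + T2.ncard + T3.ncard := by
      have := Set.ncard_union_le T1 T2
      omega
  _ ≤ m + m + k * 2 ^ k := by omega
  _ = 2 * m + k * 2 ^ k := by ring

end Stmt8

/-- The divide-and-conquer construction: for two directed paths on `n = 2^k`
vertices, given by rank bijections `e1, e2` into `Fin n`, there is a digraph
`J` (on a vertex set `Fin m` containing an injective copy of `V`, the extra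
vertices being the Steiner vertices added per recursion level) with
`O(n log n)` vertices plus arcs whose reachability relation restricted to `V`
is exactly coordinatewise dominance: `a ⇝_J b ↔ x1(a) ≤ x1(b) ∧ x2(a) ≤ x2(b)`. -/
theorem stmt_8 :
    ∃ c : ℕ, ∀ (k : ℕ) (V : Type) (e1 e2 : V ≃ Fin (2 ^ k)),
      ∃ (m : ℕ) (ι : V → Fin m) (J : Fin m → Fin m → Prop),
        Function.Injective ι ∧
        (∀ a b : V,
          Relation.ReflTransGen J (ι a) (ι b) ↔
            ((e1 a : ℕ) ≤ (e1 b : ℕ) ∧ (e2 a : ℕ) ≤ (e2 b : ℕ))) ∧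
        m + {p : Fin m × Fin m | J p.1 p.2}.ncard ≤ c * 2 ^ k * (k + 1) := by
  refine ⟨4, fun k V e1 e2 => ?_⟩
  set x2 : ℕ → ℕ := fun p => if h : p < 2 ^ k then ((e2 (e1.symm ⟨p, h⟩)) : ℕ) else p
    with hx2
  have hx2val : ∀ a : V, x2 ((e1 a).val) = (e2 a).val := by
    intro a
    rw [hx2]
    simp only [dif_pos (e1 a).isLt, Fin.eta, Equiv.symm_apply_apply]
  have hinj : ∀ p < 2 ^ k, ∀ q < 2 ^ k, x2 p = x2 q → p = q := by
    intro p hp q hq h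
    rw [hx2] at h
    simp only [dif_pos hp, dif_pos hq] at h
    have h1 : e2 (e1.symm ⟨p, hp⟩) = e2 (e1.symm ⟨q, hq⟩) := Fin.ext h
    have h2 : e1.symm ⟨p, hp⟩ = e1.symm ⟨q, hq⟩ := e2.injective h1
    have h3 : (⟨p, hp⟩ : Fin (2 ^ k)) = ⟨q, hq⟩ := e1.symm.injective h2
    exact congrArg Fin.val h3
  refine ⟨(k + 1) * 2 ^ k, fun a => Stmt8.Ov k (e1 a).val (e1 a).isLt,
    Stmt8.J k x2, ?_, ?_, ?_⟩
  · intro a b hab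
    have h' := congrArg Fin.val hab
    exact e1.injective (Fin.ext h')
  · intro a b
    constructor
    · intro h
      have := Stmt8.forward k x2 (e1 a).val (e1 b).val (e1 a).isLt (e1 b).isLt h
      rw [hx2val, hx2val] at this
      exact this
    · rintro ⟨h1, h2⟩
      refine Stmt8.reach k x2 hinj (e1 a).val (e1 b).val (e1 a).isLt (e1 b).isLt h1 ?_
      rw [hx2val, hx2val]
      exact h2
  · have hc := Stmt8.count k x2 hinj
    have hk : k * 2 ^ k ≤ (k + 1) * 2 ^ k := Nat.mul_le_mul_right _ (by omega)
    calc (k + 1) * 2 ^ k + {p : Fin ((k + 1) * 2 ^ k) × Fin ((k + 1) * 2 ^ k) |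
          Stmt8.J k x2 p.1 p.2}.ncard
        ≤ (k + 1) * 2 ^ k + (2 * ((k + 1) * 2 ^ k) + k * 2 ^ k) := by omega
      _ ≤ (k + 1) * 2 ^ k + (2 * ((k + 1) * 2 ^ k) + (k + 1) * 2 ^ k) := by omega
      _ = 4 * 2 ^ k * (k + 1) := by ring
end

section
/- Let G1 be an out-tree and G2 an in-tree on vertex set V, with underlying undirected rooted trees T1, T2 and DFS intervals I1(a), I2(a). Then for all a, b: b is reachable from a in both G1 and G2 iff I1(b) ⊆ I1(a) and I2(a) ⊆ I2(b), which (for a ≠ b) holds iff the vertical segment {s1(b)} × I2(b) intersects the horizontal segment I1(a) × {s2(a)}. -/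
/-- `a` is an ancestor of `b` in the rooted tree given by the `parent`
function (including `a = b`). -/
def isAnc {V : Type*} (parent : V → V) (a b : V) : Prop :=
  Relation.ReflTransGen (fun x y => y = parent x) b a

/-- `G1` is an out-tree (`a ⇝_{G1} b` iff `a` is an ancestor of `b` in `T1`)
and `G2` is an in-tree (`a ⇝_{G2} b` iff `b` is an ancestor of `a` in `T2`),
with DFS intervals `I1, I2` (distinct endpoints, nesting, unrelated vertices
disjoint).  Then `b` is reachable from `a` in both iff `I1(b) ⊆ I1(a)` and
`I2(a) ⊆ I2(b)`, which for `a ≠ b` holds iff the vertical segment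
`{s1 b} × I2(b)` intersects the horizontal segment `I1(a) × {s2 a}`. -/
theorem stmt_12 {V : Type*}
    (root1 : V) (parent1 : V → V) (hroot1 : parent1 root1 = root1)
    (hreach1 : ∀ v, isAnc parent1 root1 v)
    (root2 : V) (parent2 : V → V) (hroot2 : parent2 root2 = root2)
    (hreach2 : ∀ v, isAnc parent2 root2 v)
    (s1 t1 s2 t2 : V → ℕ)
    (hinj1 : Function.Injective (fun p : V × Bool => if p.2 then t1 p.1 else s1 p.1))
    (hinj2 : Function.Injective (fun p : V × Bool => if p.2 then t2 p.1 else s2 p.1))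
    (hst1 : ∀ a, s1 a < t1 a) (hst2 : ∀ a, s2 a < t2 a)
    (hanc1 : ∀ a b, isAnc parent1 a b ↔ (s1 a ≤ s1 b ∧ t1 b ≤ t1 a))
    (hanc2 : ∀ a b, isAnc parent2 a b ↔ (s2 a ≤ s2 b ∧ t2 b ≤ t2 a))
    (hdisj1 : ∀ a b, ¬ isAnc parent1 a b → ¬ isAnc parent1 b a →
      Set.Icc (s1 a) (t1 a) ∩ Set.Icc (s1 b) (t1 b) = ∅)
    (hdisj2 : ∀ a b, ¬ isAnc parent2 a b → ¬ isAnc parent2 b a →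
      Set.Icc (s2 a) (t2 a) ∩ Set.Icc (s2 b) (t2 b) = ∅) :
    ∀ a b : V,
      ((isAnc parent1 a b ∧ isAnc parent2 b a) ↔
        ((s1 a ≤ s1 b ∧ t1 b ≤ t1 a) ∧ (s2 b ≤ s2 a ∧ t2 a ≤ t2 b))) ∧
      (a ≠ b →
        ((isAnc parent1 a b ∧ isAnc parent2 b a) ↔
          (s1 a ≤ s1 b ∧ s1 b ≤ t1 a ∧ s2 b ≤ s2 a ∧ s2 a ≤ t2 b))) := by
  intro a b
  constructor
  · rw [hanc1, hanc2]
  · intro hab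
    rw [hanc1, hanc2]
    constructor
    · rintro ⟨⟨h1, h2⟩, h3, h4⟩
      exact ⟨h1, h2.trans' (hst1 b).le, h3, h4.trans' (hst2 a).le⟩
    · rintro ⟨h1, h2, h3, h4⟩
      have key1 : isAnc parent1 a b := by
        by_contra hn
        by_cases hn' : isAnc parent1 b a
        · have := (hanc1 b a).1 hn'
          have hs : s1 a = s1 b := le_antisymm h1 this.1
          exact hab (congrArg Prod.fst (hinj1 (a₁ := (a, false)) (a₂ := (b, false)) hs))
        · have := hdisj1 a b hn hn'
          have : s1 b ∈ Set.Icc (s1 a) (t1 a) ∩ Set.Icc (s1 b) (t1 b) :=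
            ⟨⟨h1, h2⟩, le_refl _, (hst1 b).le⟩
          rw [hdisj1 a b hn hn'] at this
          exact this
      have key2 : isAnc parent2 b a := by
        by_contra hn
        by_cases hn' : isAnc parent2 a b
        · have := (hanc2 a b).1 hn'
          have hs : s2 a = s2 b := le_antisymm this.1 h3
          exact hab (congrArg Prod.fst (hinj2 (a₁ := (a, false)) (a₂ := (b, false)) hs))
        · have hmem : s2 a ∈ Set.Icc (s2 b) (t2 b) ∩ Set.Icc (s2 a) (t2 a) :=
            ⟨⟨h3, h4⟩, le_refl _, (hst2 a).le⟩
          rw [hdisj2 b a hn hn'] at hmem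
          exact hmem
      exact ⟨(hanc1 a b).1 key1, (hanc2 b a).1 key2⟩
end

section
/- Let G1 and G2 both be out-trees on vertex set V with DFS intervals I1, I2 and rectangles R(a) = I1(a) × I2(a). Then for a ≠ b: b is reachable from a in both G1 and G2 iff R(b) ⊆ R(a), and this holds iff R(a) encloses some corner of R(b). -/
lemma corner_anc {V : Type*} (parent : V → V) (s t : V → ℕ)
    (hinj : Function.Injective (fun p : V × Bool => if p.2 then t p.1 else s p.1))
    (hst : ∀ a, s a < t a)
    (hanc : ∀ a b, isAnc parent a b ↔ (s a ≤ s b ∧ t b ≤ t a))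
    (hdisj : ∀ a b, ¬ isAnc parent a b → ¬ isAnc parent b a →
      Set.Icc (s a) (t a) ∩ Set.Icc (s b) (t b) = ∅)
    (a b : V) (hab : a ≠ b) (x : ℕ) (hx : x = s b ∨ x = t b)
    (h1 : s a ≤ x) (h2 : x ≤ t a) : isAnc parent a b := by
  have hor : isAnc parent a b ∨ isAnc parent b a := by
    by_contra h
    push_neg at h
    have hd := hdisj a b h.1 h.2
    have hxmem : x ∈ Set.Icc (s a) (t a) ∩ Set.Icc (s b) (t b) := by
      refine ⟨⟨h1, h2⟩, ?_⟩
      rcases hx with rfl | rfl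
      · exact ⟨le_refl _, (hst b).le⟩
      · exact ⟨(hst b).le, le_refl _⟩
    rw [hd] at hxmem
    exact hxmem
  rcases hor with h | h
  · exact h
  · obtain ⟨hsb, hta⟩ := (hanc b a).1 h
    exfalso
    rcases hx with rfl | rfl
    · have heq : s a = s b := le_antisymm h1 hsb
      have : ((a, false) : V × Bool) = (b, false) := by
        apply hinj; simpa using heq
      exact hab (congrArg Prod.fst this)
    · have heq : t a = t b := le_antisymm hta h2
      have : ((a, true) : V × Bool) = (b, true) := by
        apply hinj; simpa using heq
      exact hab (congrArg Prod.fst this)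

/-- `G1` and `G2` are both out-trees (`a` reaches `b` iff `a` is an ancestor
of `b` in the underlying rooted tree), with DFS intervals `I1, I2` on each
tree and rectangles `R(a) = I1(a) × I2(a)`.  For `a ≠ b`: `b` is reachable
from `a` in both trees iff `R(b) ⊆ R(a)`, and this holds iff `R(a)` encloses
some corner of `R(b)`. -/
theorem stmt_13 {V : Type*}
    (root1 : V) (parent1 : V → V) (hroot1 : parent1 root1 = root1)
    (hreach1 : ∀ v, isAnc parent1 root1 v)
    (root2 : V) (parent2 : V → V) (hroot2 : parent2 root2 = root2)
    (hreach2 : ∀ v, isAnc parent2 root2 v)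
    (s1 t1 s2 t2 : V → ℕ)
    (hinj1 : Function.Injective (fun p : V × Bool => if p.2 then t1 p.1 else s1 p.1))
    (hinj2 : Function.Injective (fun p : V × Bool => if p.2 then t2 p.1 else s2 p.1))
    (hst1 : ∀ a, s1 a < t1 a) (hst2 : ∀ a, s2 a < t2 a)
    (hanc1 : ∀ a b, isAnc parent1 a b ↔ (s1 a ≤ s1 b ∧ t1 b ≤ t1 a))
    (hanc2 : ∀ a b, isAnc parent2 a b ↔ (s2 a ≤ s2 b ∧ t2 b ≤ t2 a))
    (hdisj1 : ∀ a b, ¬ isAnc parent1 a b → ¬ isAnc parent1 b a →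
      Set.Icc (s1 a) (t1 a) ∩ Set.Icc (s1 b) (t1 b) = ∅)
    (hdisj2 : ∀ a b, ¬ isAnc parent2 a b → ¬ isAnc parent2 b a →
      Set.Icc (s2 a) (t2 a) ∩ Set.Icc (s2 b) (t2 b) = ∅) :
    let R : V → Set (ℕ × ℕ) := fun a => Set.Icc (s1 a) (t1 a) ×ˢ Set.Icc (s2 a) (t2 a)
    ∀ a b : V, a ≠ b →
      (((isAnc parent1 a b ∧ isAnc parent2 a b) ↔ R b ⊆ R a) ∧
       (R b ⊆ R a ↔
         ∃ x ∈ ({s1 b, t1 b} : Set ℕ), ∃ y ∈ ({s2 b, t2 b} : Set ℕ), (x, y) ∈ R a)) := by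
  intro R a b hab
  have hsub : (isAnc parent1 a b ∧ isAnc parent2 a b) → R b ⊆ R a := by
    rintro ⟨h1, h2⟩
    obtain ⟨hs1, ht1⟩ := (hanc1 a b).1 h1
    obtain ⟨hs2, ht2⟩ := (hanc2 a b).1 h2
    exact Set.prod_mono (Set.Icc_subset_Icc hs1 ht1) (Set.Icc_subset_Icc hs2 ht2)
  have hmem : ((s1 b, s2 b) : ℕ × ℕ) ∈ R b :=
    ⟨⟨le_refl _, (hst1 b).le⟩, ⟨le_refl _, (hst2 b).le⟩⟩
  have hcorner : (∃ x ∈ ({s1 b, t1 b} : Set ℕ), ∃ y ∈ ({s2 b, t2 b} : Set ℕ), (x, y) ∈ R a)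
      → (isAnc parent1 a b ∧ isAnc parent2 a b) := by
    rintro ⟨x, hx, y, hy, ⟨hx1, hx2⟩, ⟨hy1, hy2⟩⟩
    constructor
    · exact corner_anc parent1 s1 t1 hinj1 hst1 hanc1 hdisj1 a b hab x
        (by simpa using hx) hx1 hx2
    · exact corner_anc parent2 s2 t2 hinj2 hst2 hanc2 hdisj2 a b hab y
        (by simpa using hy) hy1 hy2
  constructor
  · constructor
    · exact hsub
    · intro hR
      have h1 := hR hmem
      have h2 := hR (⟨⟨(hst1 b).le, le_refl _⟩, ⟨(hst2 b).le, le_refl _⟩⟩ :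
        ((t1 b, t2 b) : ℕ × ℕ) ∈ R b)
      exact ⟨(hanc1 a b).2 ⟨h1.1.1, h2.1.2⟩, (hanc2 a b).2 ⟨h1.2.1, h2.2.2⟩⟩
  · constructor
    · intro hR
      exact ⟨s1 b, by simp, s2 b, by simp, hR hmem⟩
    · intro h
      exact hsub (hcorner h)
end

section
/- In a Cartesian tree T built over points with distinct x1-coordinates (root = point of minimum x2-coordinate, left/right subtrees built recursively over points with smaller/larger x1), for any two points a and b, the point c of minimum x2-coordinate among points with x1-coordinate in the interval [min(x1(a),x1(b)), max(x1(a),x1(b))] is the nearest common ancestor of a and b in T. -/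
/-!
The ancestors of a point `a` in the Cartesian tree of `S` are exactly the points `d ∈ S` that
are minimal among the points of `S` whose x₁-coordinate lies between those of `d` and `a`: the
root is an ancestor of everything, and a point `a` falls into the same subtree as `d` precisely
when the root does not lie between them. Nearest common ancestors then reduce to interval
bookkeeping: `[x₁ c, x₁ a]` lies inside `[x₁ a, x₁ b]`, and `[x₁ d, x₁ c]` is covered by
`[x₁ d, x₁ a] ∪ [x₁ d, x₁ b]`.
-/

/-- Points of the Cartesian tree, encoded as lexicographic pairs `(y, x)`:
the *first* coordinate is the x₂-coordinate (priority) and the *second*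
coordinate is the x₁-coordinate (position).  (With distinct x₂-coordinates the
lexicographic minimum is exactly the point of minimum x₂-coordinate.) -/
abbrev CPoint := ℕ ×ₗ ℕ

/-- The x₁-coordinate of a point. -/
def cx (p : CPoint) : ℕ := (ofLex p).2

/-- The x₂-coordinate of a point. -/
def cy (p : CPoint) : ℕ := (ofLex p).1

/-- Binary trees storing points. -/
inductive CTree where
  | leaf : CTree
  | node : CTree → CPoint → CTree → CTree

/-- The Cartesian tree of a finite set of points: the root is the point of
minimum x₂-coordinate, the left (resp. right) subtree is the Cartesian tree of
the points of smaller (resp. larger) x₁-coordinate. -/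
def cartesianTree (S : Finset CPoint) : CTree :=
  if h : S.Nonempty then
    CTree.node (cartesianTree (S.filter fun q => cx q < cx (S.min' h))) (S.min' h)
      (cartesianTree (S.filter fun q => cx (S.min' h) < cx q))
  else CTree.leaf
termination_by S.card
decreasing_by
  · exact Finset.card_lt_card (Finset.filter_ssubset.2 ⟨S.min' h, S.min'_mem h, by simp⟩)
  · exact Finset.card_lt_card (Finset.filter_ssubset.2 ⟨S.min' h, S.min'_mem h, by simp⟩)

/-- Membership of a point in a binary tree. -/
def CTree.mem : CTree → CPoint → Prop
  | .leaf, _ => False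
  | .node l p r, q => q = p ∨ l.mem q ∨ r.mem q

/-- `t.anc a b`: the node holding point `a` is an ancestor (possibly equal)
of the node holding point `b` in the binary tree `t`. -/
def CTree.anc : CTree → CPoint → CPoint → Prop
  | .leaf, _, _ => False
  | .node l p r, a, b => (a = p ∧ (b = p ∨ l.mem b ∨ r.mem b)) ∨ l.anc a b ∨ r.anc a b

lemma cartesianTree_of_nonempty {S : Finset CPoint} (h : S.Nonempty) :
    cartesianTree S =
      .node (cartesianTree (S.filter fun q => cx q < cx (S.min' h))) (S.min' h)
        (cartesianTree (S.filter fun q => cx (S.min' h) < cx q)) := by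
  rw [cartesianTree, dif_pos h]

lemma cartesianTree_empty : cartesianTree ∅ = .leaf := by
  rw [cartesianTree, dif_neg Finset.not_nonempty_empty]

lemma filter_cx_lt_min'_ssubset (S : Finset CPoint) (h : S.Nonempty) :
    (S.filter fun q => cx q < cx (S.min' h)) ⊂ S :=
  Finset.filter_ssubset.2 ⟨S.min' h, S.min'_mem h, lt_irrefl _⟩

lemma filter_min'_lt_cx_ssubset (S : Finset CPoint) (h : S.Nonempty) :
    (S.filter fun q => cx (S.min' h) < cx q) ⊂ S :=
  Finset.filter_ssubset.2 ⟨S.min' h, S.min'_mem h, lt_irrefl _⟩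

lemma mem_cartesianTree_iff {S : Finset CPoint} (hx1 : Set.InjOn cx (S : Set CPoint))
    {q : CPoint} : (cartesianTree S).mem q ↔ q ∈ S := by
  induction S using Finset.strongInduction with
  | H S ih =>
  rcases S.eq_empty_or_nonempty with rfl | h
  · simp [cartesianTree_empty, CTree.mem]
  set m := S.min' h
  have hL := filter_cx_lt_min'_ssubset S h
  have hR := filter_min'_lt_cx_ssubset S h
  rw [cartesianTree_of_nonempty h, CTree.mem,
    ih _ hL (hx1.mono (Finset.coe_subset.2 hL.subset)),
    ih _ hR (hx1.mono (Finset.coe_subset.2 hR.subset)),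
    Finset.mem_filter, Finset.mem_filter]
  constructor
  · rintro (rfl | ⟨hq, -⟩ | ⟨hq, -⟩)
    exacts [S.min'_mem h, hq, hq]
  · intro hq
    rcases lt_trichotomy (cx q) (cx m) with hlt | heq | hgt
    exacts [Or.inr (Or.inl ⟨hq, hlt⟩), Or.inl (hx1 hq (S.min'_mem h) heq),
      Or.inr (Or.inr ⟨hq, hgt⟩)]

theorem anc_cartesianTree_iff {S : Finset CPoint} (hx1 : Set.InjOn cx (S : Set CPoint))
    {d a : CPoint} :
    (cartesianTree S).anc d a ↔
      d ∈ S ∧ a ∈ S ∧ ∀ p ∈ S, cx p ∈ Set.uIcc (cx d) (cx a) → d ≤ p := by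
  induction S using Finset.strongInduction generalizing d a with
  | H S ih =>
  rcases S.eq_empty_or_nonempty with rfl | h
  · simp [cartesianTree_empty, CTree.anc]
  set m := S.min' h
  have hmem := mem_cartesianTree_iff hx1 (q := a)
  rw [cartesianTree_of_nonempty h] at hmem
  have hL := filter_cx_lt_min'_ssubset S h
  have hR := filter_min'_lt_cx_ssubset S h
  rw [cartesianTree_of_nonempty h, CTree.anc,
    ih _ hL (hx1.mono (Finset.coe_subset.2 hL.subset)),
    ih _ hR (hx1.mono (Finset.coe_subset.2 hR.subset))]
  simp only [Finset.mem_filter]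
  constructor
  · rintro (⟨rfl, ha⟩ | ⟨⟨hd, hdm⟩, ⟨ha, ham⟩, hmin⟩ | ⟨⟨hd, hdm⟩, ⟨ha, ham⟩, hmin⟩)
    · exact ⟨S.min'_mem h, hmem.1 ha, fun p hp _ => S.min'_le p hp⟩
    · refine ⟨hd, ha, fun p hp hpI => hmin p ⟨hp, ?_⟩ hpI⟩
      exact hpI.2.trans_lt (max_lt hdm ham)
    · refine ⟨hd, ha, fun p hp hpI => hmin p ⟨hp, ?_⟩ hpI⟩
      exact (lt_min hdm ham).trans_le hpI.1
  · rintro ⟨hd, ha, hmin⟩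
    have hd_eq_root : cx m ∈ Set.uIcc (cx d) (cx a) → d = m :=
      fun hmI => le_antisymm (hmin m (S.min'_mem h) hmI) (S.min'_le d hd)
    rcases lt_trichotomy (cx d) (cx m) with hlt | heq | hgt
    · have ham : cx a < cx m := by
        by_contra! hma
        exact hlt.ne (congrArg cx (hd_eq_root (Set.mem_uIcc_of_le hlt.le hma)))
      exact Or.inr (Or.inl ⟨⟨hd, hlt⟩, ⟨ha, ham⟩, fun p hp => hmin p hp.1⟩)
    · exact Or.inl ⟨hx1 hd (S.min'_mem h) heq, hmem.2 ha⟩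
    · have ham : cx m < cx a := by
        by_contra! hma
        exact hgt.ne' (congrArg cx (hd_eq_root (Set.mem_uIcc_of_ge hma hgt.le)))
      exact Or.inr (Or.inr ⟨⟨hd, hgt⟩, ⟨ha, ham⟩, fun p hp => hmin p hp.1⟩)

lemma le_of_cy_le {S : Finset CPoint} (hx2 : Set.InjOn cy (S : Set CPoint)) {p q : CPoint}
    (hp : p ∈ S) (hq : q ∈ S) (h : cy p ≤ cy q) : p ≤ q := by
  rcases h.lt_or_eq with h | h
  · exact Prod.Lex.lt_iff.2 (Or.inl h) |>.le
  · exact (hx2 hp hq h).le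

lemma uIcc_subset_uIcc_union_uIcc_of_mem {α : Type*} [LinearOrder α] {a b c d : α}
    (hc : c ∈ Set.uIcc a b) : Set.uIcc d c ⊆ Set.uIcc d a ∪ Set.uIcc d b := by
  intro x hx
  rcases Set.uIcc_subset_uIcc_union_uIcc (b := a) hx with hx | hx
  · exact Or.inl hx
  · rw [Set.uIcc_comm d a]
    exact Set.uIcc_subset_uIcc_union_uIcc (Set.uIcc_subset_uIcc_left hc hx)

/-- In a Cartesian tree over points with distinct x₁- and distinct
x₂-coordinates, for any two points `a` and `b`, the point `c` of minimum
x₂-coordinate among the points whose x₁-coordinate lies in the interval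
`[min(x₁ a, x₁ b), max(x₁ a, x₁ b)]` is the nearest common ancestor of `a`
and `b`: it is a common ancestor, and every common ancestor of `a` and `b` is
an ancestor of `c`. -/
theorem stmt_17 (S : Finset CPoint)
    (hx2 : Set.InjOn cy (S : Set CPoint))
    (hx1 : Set.InjOn cx (S : Set CPoint))
    (a b c : CPoint) (ha : a ∈ S) (hb : b ∈ S) (hc : c ∈ S)
    (hlo : min (cx a) (cx b) ≤ cx c) (hhi : cx c ≤ max (cx a) (cx b))
    (hmin : ∀ p ∈ S, min (cx a) (cx b) ≤ cx p → cx p ≤ max (cx a) (cx b) → cy c ≤ cy p) :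
    (cartesianTree S).anc c a ∧ (cartesianTree S).anc c b ∧
      ∀ d, (cartesianTree S).anc d a → (cartesianTree S).anc d b →
        (cartesianTree S).anc d c := by
  have hcI : cx c ∈ Set.uIcc (cx a) (cx b) := ⟨hlo, hhi⟩
  have hc_le : ∀ p ∈ S, cx p ∈ Set.uIcc (cx a) (cx b) → c ≤ p :=
    fun p hp hpI => le_of_cy_le hx2 hc hp (hmin p hp hpI.1 hpI.2)
  refine ⟨(anc_cartesianTree_iff hx1).2 ⟨hc, ha, fun p hp hpI => hc_le p hp ?_⟩,
    (anc_cartesianTree_iff hx1).2 ⟨hc, hb, fun p hp hpI => hc_le p hp ?_⟩, fun d hda hdb => ?_⟩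
  · rw [Set.uIcc_comm] at hpI
    exact Set.uIcc_subset_uIcc_left hcI hpI
  · exact Set.uIcc_subset_uIcc_right hcI hpI
  obtain ⟨hd, -, hda⟩ := (anc_cartesianTree_iff hx1).1 hda
  obtain ⟨-, -, hdb⟩ := (anc_cartesianTree_iff hx1).1 hdb
  refine (anc_cartesianTree_iff hx1).2 ⟨hd, hc, fun p hp hpI => ?_⟩
  rcases uIcc_subset_uIcc_union_uIcc_of_mem hcI hpI with hpI | hpI
  exacts [hda p hp hpI, hdb p hp hpI]
end
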